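/- Let (G; t_1,...,t_k) be a simple instance with G quasi-line such that G has no homogeneous clique, let (A,B) be a homogeneous pair of cliques of G with no terminal in A ∪ B, and let a' ∈ A and b' ∈ B be adjacent vertices. Let G' be the subgraph of G induced by V(G) \ ((A ∪ B) \ {a',b'}). Then (G; t_1,...,t_k) has a solution if and only if (G'; t_1,...,t_k) has a solution. -/

import Mathlib

/-- A graph is claw-free if it has no induced subgraph isomorphic to the claw `K_{1,3}`:
a center `x` adjacent to three pairwise distinct, pairwise non-adjacent leaves. -/
def ClawFree {V : Type*} (G : SimpleGraph V) : Prop :=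
  ¬ ∃ x a b c : V, G.Adj x a ∧ G.Adj x b ∧ G.Adj x c ∧
      a ≠ b ∧ a ≠ c ∧ b ≠ c ∧ ¬ G.Adj a b ∧ ¬ G.Adj a c ∧ ¬ G.Adj b c

/-- `l` is the list of consecutive vertices of an induced path of `G`:
its vertices are distinct and two of them are adjacent in `G` exactly when
they are consecutive in `l`. -/
def IsInducedPathList {V : Type*} (G : SimpleGraph V) (l : List V) : Prop :=
  l.Nodup ∧ ∀ i j : Fin l.length,
    G.Adj (l.get i) (l.get j) ↔ (i.1 + 1 = j.1 ∨ j.1 + 1 = i.1)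

/-- `l` is a solution for the instance `(G; t 0, …, t (k-1))`: an induced path with
endpoints `t 0` and `t (k-1)` that contains every terminal, the terminals appearing
along the path in the order `t 0, t 1, …, t (k-1)`. -/
def IsSolution {V : Type*} (G : SimpleGraph V) {k : ℕ} (t : Fin k → V) (l : List V) : Prop :=
  IsInducedPathList G l ∧
  ∃ pos : Fin k → Fin l.length,
    StrictMono pos ∧ (∀ i, l.get (pos i) = t i) ∧
    (∀ i : Fin k, i.1 = 0 → (pos i).1 = 0) ∧
    (∀ i : Fin k, i.1 = k - 1 → (pos i).1 = l.length - 1)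

/-- The instance `(G; t 0, …, t (k-1))` is simple: the terminals are distinct, the two end
terminals have degree one in `G`, every other terminal has degree two in `G` with its two
neighbors non-adjacent, distinct terminals are at distance at least four, and `G` is
connected. -/
def SimpleInstance {V : Type*} (G : SimpleGraph V) {k : ℕ} (t : Fin k → V) : Prop :=
  2 ≤ k ∧ Function.Injective t ∧
  (∀ i : Fin k, (i.1 = 0 ∨ i.1 = k - 1) → (G.neighborSet (t i)).ncard = 1) ∧
  (∀ i : Fin k, i.1 ≠ 0 → i.1 ≠ k - 1 →
      (G.neighborSet (t i)).ncard = 2 ∧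
      ∀ x y : V, G.Adj (t i) x → G.Adj (t i) y → x ≠ y → ¬ G.Adj x y) ∧
  (∀ i j : Fin k, i ≠ j → 4 ≤ G.dist (t i) (t j)) ∧
  G.Connected

/-- A graph is quasi-line if the neighborhood of every vertex is the union of two cliques. -/
def QuasiLine {V : Type*} (G : SimpleGraph V) : Prop :=
  ∀ u : V, ∃ A B : Set V, G.IsClique A ∧ G.IsClique B ∧ G.neighborSet u = A ∪ B

/-- A nontrivial clique `A` (a clique with at least two vertices) is homogeneous if every
vertex outside `A` is adjacent either to all vertices of `A` or to none of them. -/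
def IsHomogeneousClique {V : Type*} (G : SimpleGraph V) (A : Set V) : Prop :=
  G.IsClique A ∧ A.Nontrivial ∧
    ∀ v ∉ A, (∀ a ∈ A, G.Adj v a) ∨ (∀ a ∈ A, ¬ G.Adj v a)

/-- Two disjoint cliques `A` and `B` form a homogeneous pair if at least one of them has
at least two vertices and every vertex outside `A ∪ B` is adjacent either to all
vertices of `A` or to none of them, and likewise for `B`. -/
def IsHomogeneousPair {V : Type*} (G : SimpleGraph V) (A B : Set V) : Prop :=
  G.IsClique A ∧ G.IsClique B ∧ Disjoint A B ∧ (A.Nontrivial ∨ B.Nontrivial) ∧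
    ∀ v, v ∉ A → v ∉ B →
      ((∀ a ∈ A, G.Adj v a) ∨ (∀ a ∈ A, ¬ G.Adj v a)) ∧
      ((∀ b ∈ B, G.Adj v b) ∨ (∀ b ∈ B, ¬ G.Adj v b))

/-!
A solution of the induced subgraph is a solution of `G`. Conversely, an induced path whose ends
lie outside `A ∪ B` meets each of the cliques `A`, `B` at most once, and replacing its vertex in
`A` by `a'` and its vertex in `B` by `b'` keeps it an induced path, unless those two vertices are
non-adjacent. In that case claw-freeness puts them at distance two on the path, and the vertex
between them is complete to `A ∪ B`; having at least three neighbours it is not a terminal, and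
deleting it yields the required path.
-/

theorem QuasiLine.clawFree {V : Type*} {G : SimpleGraph V} (h : QuasiLine G) : ClawFree G := by
  rintro ⟨x, a, b, c, hxa, hxb, hxc, hab, hac, hbc, nab, nac, nbc⟩
  obtain ⟨C, D, hC, hD, hN⟩ := h x
  have hmem : ∀ v, G.Adj x v → v ∈ C ∪ D := fun v hv => hN ▸ hv
  rcases hmem a hxa with ha | ha <;> rcases hmem b hxb with hb | hb <;>
    rcases hmem c hxc with hc | hc
  exacts [nab (hC ha hb hab), nab (hC ha hb hab), nac (hC ha hc hac), nbc (hD hb hc hbc),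
    nbc (hC hb hc hbc), nac (hD ha hc hac), nab (hD ha hb hab), nab (hD ha hb hab)]

theorem ClawFree.adj_or_adj {V : Type*} {G : SimpleGraph V} (h : ClawFree G) {c x y z : V}
    (hx : G.Adj c x) (hy : G.Adj c y) (hz : G.Adj c z) (hxy : x ≠ y) (hxz : x ≠ z) (hyz : y ≠ z)
    (hnxy : ¬ G.Adj x y) : G.Adj x z ∨ G.Adj y z := by
  by_contra! hn
  exact h ⟨c, x, y, z, hx, hy, hz, hxy, hxz, hyz, hnxy, hn.1, hn.2⟩

section Paths

variable {V W : Type*}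

theorem isInducedPathList_iff {G : SimpleGraph V} {l : List V} :
    IsInducedPathList G l ↔ l.Nodup ∧ ∀ i j (hi : i < l.length) (hj : j < l.length),
      G.Adj l[i] l[j] ↔ (i + 1 = j ∨ j + 1 = i) :=
  and_congr_right fun _ => ⟨fun h i j hi hj => h ⟨i, hi⟩ ⟨j, hj⟩, fun h i j => h i j i.2 j.2⟩

theorem isInducedPathList_map_iff {G : SimpleGraph V} {H : SimpleGraph W} {f : V → W}
    {l : List V} (hinj : ∀ u ∈ l, ∀ v ∈ l, f u = f v → u = v)
    (hadj : ∀ u ∈ l, ∀ v ∈ l, H.Adj (f u) (f v) ↔ G.Adj u v) :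
    IsInducedPathList H (l.map f) ↔ IsInducedPathList G l := by
  simp only [isInducedPathList_iff, List.length_map, List.getElem_map]
  refine and_congr ⟨List.Nodup.of_map f, List.Nodup.map_on hinj⟩ (forall₄_congr fun i j hi hj => ?_)
  rw [hadj _ (List.getElem_mem hi) _ (List.getElem_mem hj)]

/-- Erasing the middle vertex `l[p]` of a path whose only chord joins `l[p - 1]` and `l[p + 1]`
leaves an induced path. -/
theorem isInducedPathList_eraseIdx {G : SimpleGraph V} {l : List V} {p : ℕ} (hnd : l.Nodup)
    (hadj : ∀ i j (hi : i < l.length) (hj : j < l.length), G.Adj l[i] l[j] ↔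
      (i + 1 = j ∨ j + 1 = i ∨ (i + 2 = j ∧ i + 1 = p) ∨ (j + 2 = i ∧ j + 1 = p))) :
    IsInducedPathList G (l.eraseIdx p) := by
  refine isInducedPathList_iff.2 ⟨hnd.eraseIdx p, fun i j hi hj => ?_⟩
  have := List.length_eraseIdx (l := l) (i := p)
  simp only [List.getElem_eraseIdx]
  split_ifs <;> rw [hadj] <;> omega

end Paths

section Terminals

variable {V W : Type*} {k : ℕ}

def TerminalsAlong (t : Fin k → V) (l : List V) : Prop :=
  ∃ pos : Fin k → Fin l.length,
    StrictMono pos ∧ (∀ i, l.get (pos i) = t i) ∧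
    (∀ i : Fin k, i.1 = 0 → (pos i).1 = 0) ∧
    (∀ i : Fin k, i.1 = k - 1 → (pos i).1 = l.length - 1)

theorem isSolution_iff {G : SimpleGraph V} {t : Fin k → V} {l : List V} :
    IsSolution G t l ↔ IsInducedPathList G l ∧ TerminalsAlong t l :=
  Iff.rfl

theorem TerminalsAlong.map {t : Fin k → V} {l : List V} (f : V → W) (h : TerminalsAlong t l) :
    TerminalsAlong (f ∘ t) (l.map f) := by
  obtain ⟨pos, hmono, hget, h0, hlast⟩ := h
  refine ⟨fun i => Fin.cast (List.length_map f).symm (pos i), fun i j hij => hmono hij,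
    fun i => ?_, h0, by simpa using hlast⟩
  simp [← hget i]

theorem TerminalsAlong.of_map {t : Fin k → V} {l : List V} {f : V → W}
    (hf : Function.Injective f) (h : TerminalsAlong (f ∘ t) (l.map f)) : TerminalsAlong t l := by
  obtain ⟨pos, hmono, hget, h0, hlast⟩ := h
  refine ⟨fun i => Fin.cast (List.length_map f) (pos i), fun i j hij => hmono hij,
    fun i => hf ?_, h0, by simpa using hlast⟩
  simpa using hget i

theorem TerminalsAlong.eraseIdx {t : Fin k → V} {l : List V} {p : ℕ} (h : TerminalsAlong t l)
    (hp : p < l.length) (hpt : ∀ i, t i ≠ l[p]) : TerminalsAlong t (l.eraseIdx p) := by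
  obtain ⟨pos, hmono, hget, h0, hlast⟩ := h
  have hlen := List.length_eraseIdx_of_lt hp
  have hne : ∀ i, (pos i).1 ≠ p := fun i he => hpt i (by simp [← hget i, he])
  refine ⟨fun i => ⟨if (pos i).1 < p then pos i else pos i - 1, ?_⟩, fun i j hij => ?_,
    fun i => ?_, fun i hi => ?_, fun i hi => ?_⟩
  · have := (pos i).2; have := hne i; split_ifs <;> omega
  · have := hmono hij; have := hne i; have := hne j
    simp only [Fin.lt_def] at this ⊢
    split_ifs <;> omega
  · have := hne i
    simp only [List.get_eq_getElem, List.getElem_eraseIdx, ← hget i]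
    split_ifs <;> (try congr 1) <;> omega
  · simp [h0 i hi]
  · have := hne i; have := hlast i hi
    simp only [hlen]; split_ifs <;> omega

theorem TerminalsAlong.pos_lt_of_ne {t : Fin k → V} {l : List V} (h : TerminalsAlong t l)
    (hk : 0 < k) {i : ℕ} (hi : i < l.length) (hit : ∀ j, l[i] ≠ t j) :
    0 < i ∧ i + 1 < l.length := by
  obtain ⟨pos, -, hget, h0, hlast⟩ := h
  have hne : ∀ j, (pos j).1 ≠ i := fun j he => hit j (by simp [← hget j, he])
  have := hne ⟨0, hk⟩; have := hne ⟨k - 1, by omega⟩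
  have := h0 ⟨0, hk⟩ rfl; have := hlast ⟨k - 1, by omega⟩ rfl
  omega

theorem isSolution_induce_iff {G : SimpleGraph V} {s : Set V} {t : Fin k → s} {l : List s} :
    IsSolution (G.induce s) t l ↔ IsSolution G (Subtype.val ∘ t) (l.map Subtype.val) := by
  rw [isSolution_iff, isSolution_iff, isInducedPathList_map_iff (G := G.induce s)
    (fun _ _ _ _ => Subtype.ext) (fun _ _ _ _ => Iff.rfl)]
  exact and_congr_right fun _ => ⟨TerminalsAlong.map _, TerminalsAlong.of_map Subtype.val_injective⟩

end Terminals

theorem SimpleInstance.ncard_neighborSet_terminal {V : Type*} {G : SimpleGraph V} {k : ℕ}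
    {t : Fin k → V} (h : SimpleInstance G t) (i : Fin k) :
    0 < (G.neighborSet (t i)).ncard ∧ (G.neighborSet (t i)).ncard ≤ 2 := by
  obtain ⟨-, -, hend, hmid, -⟩ := h
  by_cases hi : i.1 = 0 ∨ i.1 = k - 1
  · rw [hend i hi]; omega
  · push Not at hi
    rw [(hmid i hi.1 hi.2).1]; omega

noncomputable def contractPair {V : Type*} (A B : Set V) (a' b' : V) (v : V) : V :=
  open Classical in if v ∈ A then a' else if v ∈ B then b' else v

theorem contractPair_of_not_mem {V : Type*} {A B : Set V} {a' b' v : V} (h : v ∉ A ∪ B) :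
    contractPair A B a' b' v = v := by
  simp_all [contractPair]

theorem contractPair_not_mem {V : Type*} (A B : Set V) (a' b' v : V) :
    contractPair A B a' b' v ∉ (A ∪ B) \ {a', b'} := by
  unfold contractPair; split_ifs <;> simp_all

namespace IsHomogeneousPair

variable {V : Type*} {G : SimpleGraph V} {A B : Set V}

theorem symm (hAB : IsHomogeneousPair G A B) : IsHomogeneousPair G B A := by
  obtain ⟨hA, hB, hd, hn, hh⟩ := hAB
  exact ⟨hB, hA, hd.symm, hn.symm, fun v hvB hvA => (hh v hvA hvB).symm⟩

theorem adj_iff_of_mem_left (hAB : IsHomogeneousPair G A B) {v a₁ a₂ : V} (hv : v ∉ A ∪ B)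
    (ha₁ : a₁ ∈ A) (ha₂ : a₂ ∈ A) : G.Adj v a₁ ↔ G.Adj v a₂ := by
  rw [Set.mem_union, not_or] at hv
  rcases (hAB.2.2.2.2 v hv.1 hv.2).1 with h | h
  · exact iff_of_true (h a₁ ha₁) (h a₂ ha₂)
  · exact iff_of_false (h a₁ ha₁) (h a₂ ha₂)

theorem adj_iff_of_mem_right (hAB : IsHomogeneousPair G A B) {v b₁ b₂ : V} (hv : v ∉ A ∪ B)
    (hb₁ : b₁ ∈ B) (hb₂ : b₂ ∈ B) : G.Adj v b₁ ↔ G.Adj v b₂ :=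
  hAB.symm.adj_iff_of_mem_left (by rwa [Set.union_comm]) hb₁ hb₂

theorem mem_right_of_adj_of_not_adj (hAB : IsHomogeneousPair G A B) {v a₁ a₂ : V}
    (ha₁ : a₁ ∈ A) (ha₂ : a₂ ∈ A) (h₁ : G.Adj v a₁) (h₂ : ¬ G.Adj v a₂) (hne : v ≠ a₂) : v ∈ B := by
  by_contra hvB
  by_cases hvA : v ∈ A
  · exact h₂ (hAB.1 hvA ha₂ hne)
  · exact h₂ ((hAB.adj_iff_of_mem_left (by simp [hvA, hvB]) ha₁ ha₂).1 h₁)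

/-- An induced path whose ends lie outside `A` meets `A` at most once: two consecutive vertices
of `A` on it would force both outer neighbours into the clique `B`, creating a chord. -/
theorem eq_of_mem_left (hAB : IsHomogeneousPair G A B) {l : List V} (hl : IsInducedPathList G l)
    (hint : ∀ i (hi : i < l.length), l[i] ∈ A → 0 < i ∧ i + 1 < l.length)
    {u v : V} (hu : u ∈ l) (hv : v ∈ l) (huA : u ∈ A) (hvA : v ∈ A) : u = v := by
  obtain ⟨hnd, hadj⟩ := isInducedPathList_iff.1 hl
  obtain ⟨i, hi, rfl⟩ := List.getElem_of_mem hu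
  obtain ⟨j, hj, rfl⟩ := List.getElem_of_mem hv
  clear hu hv
  wlog hij : i < j generalizing i j
  · rcases Nat.lt_or_ge j i with h | h
    · exact (this j hj hvA i hi huA h).symm
    · obtain rfl : i = j := by omega
      rfl
  have hne : ∀ {m n} (hm : m < l.length) (hn : n < l.length), m ≠ n → l[m] ≠ l[n] :=
    fun _ _ h e => h (hnd.getElem_inj_iff.1 e)
  have hji : j = i + 1 := by
    have := (hadj i j hi hj).1 (hAB.1 huA hvA (hne hi hj (by omega))); omega
  subst hji
  obtain ⟨h0, -⟩ := hint i hi huA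
  obtain ⟨-, hlen⟩ := hint (i + 1) hj hvA
  have hB₁ : l[i - 1] ∈ B := hAB.mem_right_of_adj_of_not_adj huA hvA
    ((hadj _ _ _ _).2 (by omega)) (by rw [hadj]; omega) (hne _ _ (by omega))
  have hB₂ : l[i + 2] ∈ B := hAB.mem_right_of_adj_of_not_adj hvA huA
    ((hadj _ _ _ _).2 (by omega)) (by rw [hadj]; omega) (hne _ _ (by omega))
  have := (hadj _ _ _ _).1 (hAB.2.1 hB₁ hB₂ (hne _ _ (by omega)))
  omega

theorem two_lt_ncard_union (hAB : IsHomogeneousPair G A B) (hA : A.Nonempty) (hB : B.Nonempty)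
    (hfin : (A ∪ B).Finite) : 2 < (A ∪ B).ncard := by
  have hAfin := hfin.subset Set.subset_union_left
  have hBfin := hfin.subset Set.subset_union_right
  have := hAfin.to_subtype
  have := hBfin.to_subtype
  rw [Set.ncard_union_eq hAB.2.2.1 hAfin hBfin]
  have := (Set.ncard_pos hAfin).2 hA
  have := (Set.ncard_pos hBfin).2 hB
  rcases hAB.2.2.2.1 with h | h
  · have := Set.one_lt_ncard_iff_nontrivial.2 h; omega
  · have := Set.one_lt_ncard_iff_nontrivial.2 h; omega

theorem adj_contractPair_iff (hAB : IsHomogeneousPair G A B) {a' b' : V} (ha' : a' ∈ A)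
    (hb' : b' ∈ B) (hab : G.Adj a' b') {u v : V} (hA : u ∈ A → v ∈ A → u = v)
    (hB : u ∈ B → v ∈ B → u = v) :
    G.Adj (contractPair A B a' b' u) (contractPair A B a' b' v) ↔
      G.Adj u v ∨ u ∈ A ∧ v ∈ B ∨ u ∈ B ∧ v ∈ A := by
  have hd := Set.disjoint_left.1 hAB.2.2.1
  have cases : ∀ w, (w ∈ A ∧ contractPair A B a' b' w = a') ∨
      (w ∈ B ∧ contractPair A B a' b' w = b') ∨ (w ∉ A ∪ B ∧ contractPair A B a' b' w = w) := by
    intro w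
    unfold contractPair
    by_cases hwA : w ∈ A
    · simp [hwA]
    · by_cases hwB : w ∈ B <;> simp [hwA, hwB]
  rcases cases u with ⟨hu, hσu⟩ | ⟨hu, hσu⟩ | ⟨hu, hσu⟩ <;>
    rcases cases v with ⟨hv, hσv⟩ | ⟨hv, hσv⟩ | ⟨hv, hσv⟩ <;> rw [hσu, hσv]
  · obtain rfl := hA hu hv; simp [hd hu]
  · simp [hab, hu, hv]
  · rw [G.adj_comm, hAB.adj_iff_of_mem_left hv ha' hu, G.adj_comm]
    simp_all
  · simp [hab.symm, hu, hv]
  · obtain rfl := hB hu hv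
    simp [show u ∉ A from fun h => hd h hu]
  · rw [G.adj_comm, hAB.adj_iff_of_mem_right hv hb' hu, G.adj_comm]
    simp_all
  · rw [hAB.adj_iff_of_mem_left hu ha' hv]
    simp_all
  · rw [hAB.adj_iff_of_mem_right hu hb' hv]
    simp_all
  · simp_all

theorem contractPair_injective (hAB : IsHomogeneousPair G A B) {a' b' : V} (ha' : a' ∈ A)
    (hb' : b' ∈ B) {u v : V} (hA : u ∈ A → v ∈ A → u = v) (hB : u ∈ B → v ∈ B → u = v)
    (h : contractPair A B a' b' u = contractPair A B a' b' v) : u = v := by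
  have hd := Set.disjoint_left.1 hAB.2.2.1
  unfold contractPair at h
  split_ifs at h <;> subst_vars <;> simp_all

/-- On an induced path, the vertex of `A` and the vertex of `B` are at distance two unless they are
adjacent: otherwise `a'`, the two path neighbours of the `A`-vertex and `b'` would form a claw. -/
theorem two_apart_of_not_adj (hAB : IsHomogeneousPair G A B) (hcf : ClawFree G) {a' b' : V}
    (ha' : a' ∈ A) (hb' : b' ∈ B) (hab : G.Adj a' b') {l : List V} (hl : IsInducedPathList G l)
    (hint : ∀ i (hi : i < l.length), l[i] ∈ A ∪ B → 0 < i ∧ i + 1 < l.length)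
    {i j : ℕ} (hi : i < l.length) (hj : j < l.length) (hiA : l[i] ∈ A) (hjB : l[j] ∈ B)
    (hn : ¬ G.Adj l[i] l[j]) : i + 2 = j ∨ j + 2 = i := by
  obtain ⟨hnd, hadj⟩ := isInducedPathList_iff.1 hl
  have hinj : ∀ {m n} (hm : m < l.length) (hn : n < l.length), l[m] = l[n] → m = n :=
    fun _ _ e => hnd.getElem_inj_iff.1 e
  obtain ⟨hi0, hilen⟩ := hint i hi (Or.inl hiA)
  have hij : i ≠ j := fun e => Set.disjoint_left.1 hAB.2.2.1 hiA (by simpa [e] using hjB)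
  rw [hadj] at hn
  have hout : ∀ m (hm : m < l.length), (m + 1 = i ∨ i + 1 = m) → l[m] ∉ A ∪ B := by
    rintro m hm hmi (hmA | hmB)
    · have := hinj hm hi (hAB.eq_of_mem_left hl (fun n hn h => hint n hn (Or.inl h))
        (List.getElem_mem hm) (List.getElem_mem hi) hmA hiA)
      omega
    · have := hinj hm hj (hAB.symm.eq_of_mem_left hl (fun n hn h => hint n hn (Or.inr h))
        (List.getElem_mem hm) (List.getElem_mem hj) hmB hjB)
      omega
  have hxout := hout (i - 1) (by omega) (by omega)
  have hyout := hout (i + 1) hilen (by omega)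
  have hxa : G.Adj a' l[i - 1] :=
    G.adj_symm ((hAB.adj_iff_of_mem_left hxout hiA ha').1 ((hadj _ _ _ _).2 (by omega)))
  have hya : G.Adj a' l[i + 1] :=
    G.adj_symm ((hAB.adj_iff_of_mem_left hyout hiA ha').1 ((hadj _ _ _ _).2 (by omega)))
  have hxy : l[i - 1] ≠ l[i + 1] := fun e => by have := hinj _ _ e; omega
  have hnb : ∀ w ∉ A ∪ B, w ≠ b' := fun w hw e => hw (Or.inr (e ▸ hb'))
  rcases hcf.adj_or_adj hxa hya hab hxy (hnb _ hxout) (hnb _ hyout) (by rw [hadj]; omega)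
    with h | h
  · have := (hadj _ _ _ _).1 ((hAB.adj_iff_of_mem_right hxout hb' hjB).1 h); omega
  · have := (hadj _ _ _ _).1 ((hAB.adj_iff_of_mem_right hyout hb' hjB).1 h); omega

theorem subset_neighborSet (hAB : IsHomogeneousPair G A B) {y a b : V} (hy : y ∉ A ∪ B)
    (ha : a ∈ A) (hb : b ∈ B) (hya : G.Adj y a) (hyb : G.Adj y b) : A ∪ B ⊆ G.neighborSet y := by
  rintro w (hw | hw)
  · exact (hAB.adj_iff_of_mem_left hy ha hw).1 hya
  · exact (hAB.adj_iff_of_mem_right hy hb hw).1 hyb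

theorem not_subset_neighborSet_terminal (hAB : IsHomogeneousPair G A B) {k : ℕ}
    {t : Fin k → V} (hsi : SimpleInstance G t) (hA : A.Nonempty) (hB : B.Nonempty)
    (i : Fin k) : ¬ A ∪ B ⊆ G.neighborSet (t i) := by
  intro hsub
  obtain ⟨hpos, hle⟩ := hsi.ncard_neighborSet_terminal i
  have hfin := Set.finite_of_ncard_pos hpos
  have := hAB.two_lt_ncard_union hA hB (hfin.subset hsub)
  have := Set.ncard_le_ncard hsub hfin
  omega

section Contract

variable {a' b' : V} {l : List V}

theorem isInducedPathList_map_contractPair (hAB : IsHomogeneousPair G A B) (ha' : a' ∈ A)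
    (hb' : b' ∈ B) (hab : G.Adj a' b') (hl : IsInducedPathList G l)
    (hA : ∀ u ∈ l, ∀ v ∈ l, u ∈ A → v ∈ A → u = v) (hB : ∀ u ∈ l, ∀ v ∈ l, u ∈ B → v ∈ B → u = v)
    (hcross : ∀ u ∈ l, ∀ v ∈ l, u ∈ A → v ∈ B → G.Adj u v) :
    IsInducedPathList G (l.map (contractPair A B a' b')) := by
  refine (isInducedPathList_map_iff (fun u hu v hv => ?_) fun u hu v hv => ?_).2 hl
  · exact hAB.contractPair_injective ha' hb' (hA u hu v hv) (hB u hu v hv)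
  rw [hAB.adj_contractPair_iff ha' hb' hab (hA u hu v hv) (hB u hu v hv)]
  refine ⟨?_, Or.inl⟩
  rintro (h | ⟨h₁, h₂⟩ | ⟨h₁, h₂⟩)
  exacts [h, hcross u hu v hv h₁ h₂, (hcross v hv u hu h₂ h₁).symm]

/-- When the vertices `l[ia] ∈ A` and `l[ib] ∈ B` are two apart, contracting creates the single
chord `a'b'` over the vertex between them, which is then erased. -/
theorem isInducedPathList_eraseIdx_map_contractPair (hAB : IsHomogeneousPair G A B)
    (ha' : a' ∈ A) (hb' : b' ∈ B) (hab : G.Adj a' b') (hl : IsInducedPathList G l)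
    (hA : ∀ u ∈ l, ∀ v ∈ l, u ∈ A → v ∈ A → u = v) (hB : ∀ u ∈ l, ∀ v ∈ l, u ∈ B → v ∈ B → u = v)
    {ia ib : ℕ} (hia : ia < l.length) (hib : ib < l.length) (haA : l[ia] ∈ A) (hbB : l[ib] ∈ B)
    (h2 : ia + 2 = ib ∨ ib + 2 = ia) :
    IsInducedPathList G ((l.map (contractPair A B a' b')).eraseIdx (min ia ib + 1)) := by
  obtain ⟨hnd, hadj⟩ := isInducedPathList_iff.1 hl
  have hmemA : ∀ i (hi : i < l.length), l[i] ∈ A ↔ i = ia := fun i hi =>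
    ⟨fun h => hnd.getElem_inj_iff.1 (hA _ (List.getElem_mem hi) _ (List.getElem_mem hia) h haA),
      by rintro rfl; exact haA⟩
  have hmemB : ∀ i (hi : i < l.length), l[i] ∈ B ↔ i = ib := fun i hi =>
    ⟨fun h => hnd.getElem_inj_iff.1 (hB _ (List.getElem_mem hi) _ (List.getElem_mem hib) h hbB),
      by rintro rfl; exact hbB⟩
  refine isInducedPathList_eraseIdx
    (hnd.map_on fun u hu v hv => hAB.contractPair_injective ha' hb' (hA u hu v hv) (hB u hu v hv))
    fun i j hi hj => ?_
  simp only [List.getElem_map]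
  rw [hAB.adj_contractPair_iff ha' hb' hab (hA _ (List.getElem_mem _) _ (List.getElem_mem _))
    (hB _ (List.getElem_mem _) _ (List.getElem_mem _)), hadj, hmemA, hmemA, hmemB, hmemB]
  omega

end Contract

theorem exists_isSolution_contractPair (hAB : IsHomogeneousPair G A B) (hcf : ClawFree G)
    {k : ℕ} {t : Fin k → V} (hsi : SimpleInstance G t) (hterm : ∀ i, t i ∉ A ∪ B) {a' b' : V}
    (ha' : a' ∈ A) (hb' : b' ∈ B) (hab : G.Adj a' b') {l : List V} (hl : IsSolution G t l) :
    ∃ l' : List V, IsSolution G t l' ∧ ∀ v ∈ l', v ∉ (A ∪ B) \ {a', b'} := by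
  obtain ⟨hpath, hterms⟩ := isSolution_iff.1 hl
  have hint : ∀ i (hi : i < l.length), l[i] ∈ A ∪ B → 0 < i ∧ i + 1 < l.length :=
    fun i hi h => hterms.pos_lt_of_ne (by have := hsi.1; omega) hi fun j e => hterm j (e ▸ h)
  have hA : ∀ u ∈ l, ∀ v ∈ l, u ∈ A → v ∈ A → u = v := fun u hu v hv =>
    hAB.eq_of_mem_left hpath (fun i hi h => hint i hi (Or.inl h)) hu hv
  have hB : ∀ u ∈ l, ∀ v ∈ l, u ∈ B → v ∈ B → u = v := fun u hu v hv =>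
    hAB.symm.eq_of_mem_left hpath (fun i hi h => hint i hi (Or.inr h)) hu hv
  have hσt : TerminalsAlong t (l.map (contractPair A B a' b')) := by
    simpa [Function.comp_def, contractPair_of_not_mem (hterm _)] using
      hterms.map (contractPair A B a' b')
  have hσmem : ∀ v ∈ l.map (contractPair A B a' b'), v ∉ (A ∪ B) \ {a', b'} := by
    simp only [List.mem_map]
    rintro _ ⟨u, -, rfl⟩
    exact contractPair_not_mem A B a' b' u
  by_cases hcross : ∀ u ∈ l, ∀ v ∈ l, u ∈ A → v ∈ B → G.Adj u v
  · exact ⟨_, ⟨hAB.isInducedPathList_map_contractPair ha' hb' hab hpath hA hB hcross, hσt⟩, hσmem⟩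
  push Not at hcross
  obtain ⟨_, ha, _, hb, haA, hbB, hn⟩ := hcross
  obtain ⟨ia, hia, rfl⟩ := List.getElem_of_mem ha
  obtain ⟨ib, hib, rfl⟩ := List.getElem_of_mem hb
  obtain ⟨hnd, hadj⟩ := isInducedPathList_iff.1 hpath
  have h2 := hAB.two_apart_of_not_adj hcf ha' hb' hab hpath hint hia hib haA hbB hn
  set p := min ia ib + 1
  have hp : p < l.length := by omega
  have hpout : l[p] ∉ A ∪ B := by
    rintro (h | h)
    · have := hnd.getElem_inj_iff.1 (hA _ (List.getElem_mem hp) _ ha h haA); omega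
    · have := hnd.getElem_inj_iff.1 (hB _ (List.getElem_mem hp) _ hb h hbB); omega
  have hpt : ∀ i, t i ≠ l[p] := fun i hti => hAB.not_subset_neighborSet_terminal hsi ⟨_, ha'⟩ ⟨_, hb'⟩ i
    (hti ▸ hAB.subset_neighborSet hpout haA hbB ((hadj _ _ _ _).2 (by omega))
      ((hadj _ _ _ _).2 (by omega)))
  refine ⟨_, ⟨hAB.isInducedPathList_eraseIdx_map_contractPair ha' hb' hab hpath hA hB hia hib
    haA hbB h2, hσt.eraseIdx (by simpa) ?_⟩, fun v hv => hσmem v (List.mem_of_mem_eraseIdx hv)⟩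
  intro i
  rw [List.getElem_map, contractPair_of_not_mem hpout]
  exact hpt i

end IsHomogeneousPair

theorem stmt11_general {V : Type*} (G : SimpleGraph V) {k : ℕ} (t : Fin k → V)
    (hsi : SimpleInstance G t) (hql : QuasiLine G)
    (A B : Set V) (hAB : IsHomogeneousPair G A B)
    (hterm : ∀ i, t i ∉ A ∪ B)
    (a' b' : V) (ha' : a' ∈ A) (hb' : b' ∈ B) (hab : G.Adj a' b') :
    (∃ l : List V, IsSolution G t l) ↔
      ∃ l : List {v : V // v ∈ ({v | v ∉ (A ∪ B) \ ({a', b'} : Set V)} : Set V)},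
        IsSolution (G.induce {v | v ∉ (A ∪ B) \ ({a', b'} : Set V)})
          (fun i => ⟨t i, fun hm => hterm i hm.1⟩) l := by
  constructor
  · rintro ⟨l, hl⟩
    obtain ⟨l', hl', hmem⟩ :=
      hAB.exists_isSolution_contractPair hql.clawFree hsi hterm ha' hb' hab hl
    lift l' to List {v : V // v ∈ ({v | v ∉ (A ∪ B) \ ({a', b'} : Set V)} : Set V)} using hmem
    exact ⟨l', isSolution_induce_iff.2 hl'⟩
  · rintro ⟨l, hl⟩
    exact ⟨_, isSolution_induce_iff.1 hl⟩

/-- Lemma 13 (terminal-free case): let `(G; t)` be a simple quasi-line instance with no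
homogeneous clique, `(A, B)` a homogeneous pair of cliques containing no terminal, and
`a' ∈ A`, `b' ∈ B` adjacent. Contracting `A` and `B` to the single vertices `a'` and `b'`
(i.e. passing to the subgraph induced on `V(G) \ ((A ∪ B) \ {a', b'})`) preserves the
existence of a solution. -/
theorem stmt11 {V : Type*} [Fintype V] (G : SimpleGraph V) {k : ℕ} (t : Fin k → V)
    (hsi : SimpleInstance G t) (hql : QuasiLine G)
    (hnohc : ¬ ∃ A : Set V, IsHomogeneousClique G A)
    (A B : Set V) (hAB : IsHomogeneousPair G A B)
    (hterm : ∀ i, t i ∉ A ∪ B)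
    (a' b' : V) (ha' : a' ∈ A) (hb' : b' ∈ B) (hab : G.Adj a' b') :
    (∃ l : List V, IsSolution G t l) ↔
      ∃ l : List {v : V // v ∈ ({v | v ∉ (A ∪ B) \ ({a', b'} : Set V)} : Set V)},
        IsSolution (G.induce {v | v ∉ (A ∪ B) \ ({a', b'} : Set V)})
          (fun i => ⟨t i, fun hm => hterm i hm.1⟩) l :=
  stmt11_general G t hsi hql A B hAB hterm a' b' ha' hb' hab
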